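/- For a > −1/2 and x > 0, the hypergeometric function ₁F₂(a+1; a+3/2, 2(a+1); −x²) equals (Γ(a+3/2)²/(x/2)^{2a+1}) J_{a+1/2}(x)², and in particular is nonnegative. -/

import Mathlib

open Real Filter

/-- Pochhammer symbol `(a)_k` for real `a`. -/
noncomputable def poch (a : ℝ) (k : ℕ) : ℝ := (ascPochhammer ℝ k).eval a

/-- The generalized hypergeometric function `₁F₂(a; b₁, b₂; z)`. -/
noncomputable def oneF2 (a b₁ b₂ z : ℝ) : ℝ :=
  ∑' k : ℕ, poch a k / (poch b₁ k * poch b₂ k) * z ^ k / (Nat.factorial k : ℝ)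

/-- The Bessel function of the first kind `J_ν(x)`, defined by its power
series. -/
noncomputable def besselJ (ν x : ℝ) : ℝ :=
  ∑' k : ℕ, (-1) ^ k / ((Nat.factorial k : ℝ) * Real.Gamma (ν + k + 1)) *
    (x / 2) ^ (2 * (k : ℝ) + ν)

open Finset

namespace Stmt18Aux

noncomputable def AA (c : ℝ) (i : ℕ) : ℝ := ((Nat.factorial i : ℝ) * Real.Gamma (c + i))⁻¹

noncomputable def SS (c : ℝ) (n : ℕ) : ℝ := ∑ i ∈ Finset.range (n+1), AA c i * AA c (n - i)

variable {c : ℝ}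

lemma cast_pos (hc : 1 < c) (i : ℕ) : 0 < c + i := by
  have : (0:ℝ) ≤ i := Nat.cast_nonneg i
  linarith

lemma Gpos (hc : 1 < c) (i : ℕ) : 0 < Real.Gamma (c + i) :=
  Real.Gamma_pos_of_pos (cast_pos hc i)

lemma AA_pos (hc : 1 < c) (i : ℕ) : 0 < AA c i := by
  have h1 : (0:ℝ) < (Nat.factorial i : ℝ) := by positivity
  have := Gpos hc i
  unfold AA
  positivity

lemma Arec (hc : 1 < c) (i : ℕ) : AA c (i+1) * (((i:ℝ)+1) * (c+i)) = AA c i := by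
  have hG := Gpos hc i
  have hne : c + (i:ℝ) ≠ 0 := (cast_pos hc i).ne'
  have hGs : Real.Gamma (c + ((i:ℕ)+1:ℕ)) = (c + i) * Real.Gamma (c + i) := by
    push_cast
    rw [show c + ((i:ℝ)+1) = (c + i) + 1 by ring, Real.Gamma_add_one hne]
  have hfac : ((Nat.factorial (i+1) : ℕ) : ℝ) = ((i:ℝ)+1) * (Nat.factorial i : ℝ) := by
    rw [Nat.factorial_succ]; push_cast; ring
  have hf : (0:ℝ) < (Nat.factorial i : ℝ) := by positivity
  unfold AA
  rw [hGs, hfac]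
  field_simp

lemma peel (hc : 1 < c) (n : ℕ) (h : ℕ → ℝ) :
    ∑ i ∈ range (n+2), (AA c i * ((i:ℝ) * (c + i - 1))) * h i
      = ∑ i ∈ range (n+1), AA c i * h (i+1) := by
  rw [Finset.sum_range_succ']
  have h0 : (AA c 0 * (((0:ℕ):ℝ) * (c + ((0:ℕ):ℝ) - 1))) * h 0 = 0 := by simp
  rw [h0, add_zero]
  refine Finset.sum_congr rfl fun i _ => ?_
  have hw : ((i+1:ℕ):ℝ) * (c + ((i+1:ℕ):ℝ) - 1) = ((i:ℝ)+1) * (c+i) := by push_cast; ring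
  rw [hw, Arec hc i]

lemma peelR (hc : 1 < c) (n : ℕ) (h : ℕ → ℝ) :
    ∑ i ∈ range (n+2), (AA c (n+1-i) * (((n:ℝ)+1-i) * (c + n - i))) * h i
      = ∑ i ∈ range (n+1), AA c (n-i) * h i := by
  rw [Finset.sum_range_succ]
  have h0 : (AA c (n+1-(n+1)) * (((n:ℝ)+1-((n+1:ℕ):ℝ)) * (c + n - ((n+1:ℕ):ℝ)))) * h (n+1) = 0 := by
    push_cast; ring_nf
  rw [h0, add_zero]
  refine Finset.sum_congr rfl fun i hi => ?_
  have hile : i ≤ n := Nat.lt_succ_iff.mp (Finset.mem_range.mp hi)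
  have h1 : n + 1 - i = (n - i) + 1 := by omega
  have h2 : ((n-i:ℕ):ℝ) = (n:ℝ) - i := by
    rw [Nat.cast_sub hile]
  have hw : ((n:ℝ)+1-i) * (c + n - i) = (((n-i:ℕ):ℝ)+1) * (c + ((n-i:ℕ):ℝ)) := by
    rw [h2]; ring
  rw [h1, hw, Arec hc (n-i)]

lemma R1 (hc : 1 < c) (n : ℕ) :
    ∑ i ∈ range (n+2), AA c i * AA c (n+1-i) * ((i:ℝ) * (c + i - 1)) = SS c n := by
  calc ∑ i ∈ range (n+2), AA c i * AA c (n+1-i) * ((i:ℝ) * (c + i - 1))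
      = ∑ i ∈ range (n+2), (AA c i * ((i:ℝ) * (c + i - 1))) * AA c (n+1-i) := by
        refine Finset.sum_congr rfl fun i _ => by ring
    _ = ∑ i ∈ range (n+1), AA c i * AA c (n+1-(i+1)) := peel hc n _
    _ = SS c n := by
        unfold SS
        refine Finset.sum_congr rfl fun i _ => ?_
        congr 2
        omega

lemma R2 (hc : 1 < c) (n : ℕ) :
    ∑ i ∈ range (n+2), AA c i * AA c (n+1-i) * (((n:ℝ)+1-i) * (c + n - i)) = SS c n := by
  calc ∑ i ∈ range (n+2), AA c i * AA c (n+1-i) * (((n:ℝ)+1-i) * (c + n - i))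
      = ∑ i ∈ range (n+2), (AA c (n+1-i) * (((n:ℝ)+1-i) * (c + n - i))) * AA c i := by
        refine Finset.sum_congr rfl fun i _ => by ring
    _ = ∑ i ∈ range (n+1), AA c (n-i) * AA c i := peelR hc n _
    _ = SS c n := by
        unfold SS
        refine Finset.sum_congr rfl fun i _ => by ring

end Stmt18Aux

namespace Stmt18Aux2
open Stmt18Aux

variable {c : ℝ}

lemma R3 (hc : 1 < c) (n : ℕ) :
    ∑ i ∈ range (n+3), AA c i * AA c (n+2-i) *
        ((i:ℝ) * (c + i - 1)) * ((((n:ℝ)+2-i)) * (c + n + 1 - i)) = SS c n := by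
  calc ∑ i ∈ range (n+3), AA c i * AA c (n+2-i) * ((i:ℝ) * (c + i - 1)) *
          ((((n:ℝ)+2-i)) * (c + n + 1 - i))
      = ∑ i ∈ range ((n+1)+2), (AA c i * ((i:ℝ) * (c + i - 1))) *
          (AA c (n+2-i) * ((((n:ℝ)+2-i)) * (c + n + 1 - i))) := by
        refine Finset.sum_congr rfl fun i _ => by ring
    _ = ∑ i ∈ range (n+2), AA c i *
          (AA c (n+2-(i+1)) * ((((n:ℝ)+2-((i+1:ℕ):ℝ))) * (c + n + 1 - ((i+1:ℕ):ℝ)))) :=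
        peel hc (n+1) _
    _ = ∑ i ∈ range (n+2), AA c i * AA c (n+1-i) * (((n:ℝ)+1-i) * (c + n - i)) := by
        refine Finset.sum_congr rfl fun i _ => ?_
        have h1 : n+2-(i+1) = n+1-i := by omega
        rw [h1]; push_cast; ring
    _ = SS c n := R2 hc n

lemma R4 (hc : 1 < c) (n : ℕ) :
    ∑ i ∈ range (n+3), AA c i * AA c (n+2-i) *
        ((i:ℝ) * (c + i - 1)) * (((i:ℝ) - 1) * (c + i - 2)) = SS c n := by
  calc ∑ i ∈ range (n+3), AA c i * AA c (n+2-i) * ((i:ℝ) * (c + i - 1)) *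
          (((i:ℝ) - 1) * (c + i - 2))
      = ∑ i ∈ range ((n+1)+2), (AA c i * ((i:ℝ) * (c + i - 1))) *
          (AA c (n+2-i) * (((i:ℝ) - 1) * (c + i - 2))) := by
        refine Finset.sum_congr rfl fun i _ => by ring
    _ = ∑ i ∈ range (n+2), AA c i *
          (AA c (n+2-(i+1)) * ((((i+1:ℕ):ℝ) - 1) * (c + ((i+1:ℕ):ℝ) - 2))) :=
        peel hc (n+1) _
    _ = ∑ i ∈ range (n+2), AA c i * AA c (n+1-i) * ((i:ℝ) * (c + i - 1)) := by
        refine Finset.sum_congr rfl fun i _ => ?_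
        have h1 : n+2-(i+1) = n+1-i := by omega
        rw [h1]; push_cast; ring
    _ = SS c n := R1 hc n

lemma R5 (hc : 1 < c) (n : ℕ) :
    ∑ i ∈ range (n+3), AA c i * AA c (n+2-i) *
        ((((n:ℝ)+2-i)) * (c + n + 1 - i)) * ((((n:ℝ)+1-i)) * (c + n - i)) = SS c n := by
  calc ∑ i ∈ range (n+3), AA c i * AA c (n+2-i) * ((((n:ℝ)+2-i)) * (c + n + 1 - i)) *
          ((((n:ℝ)+1-i)) * (c + n - i))
      = ∑ i ∈ range ((n+1)+2), (AA c ((n+1)+1-i) * ((((n+1:ℕ):ℝ)+1-i) * (c + ((n+1:ℕ):ℝ) - i))) *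
          (AA c i * ((((n:ℝ)+1-i)) * (c + n - i))) := by
        refine Finset.sum_congr rfl fun i _ => ?_
        have h1 : (n+1)+1-i = n+2-i := by omega
        rw [h1]; push_cast; ring
    _ = ∑ i ∈ range (n+2), AA c ((n+1)-i) * (AA c i * ((((n:ℝ)+1-i)) * (c + n - i))) :=
        peelR hc (n+1) _
    _ = ∑ i ∈ range (n+2), AA c i * AA c (n+1-i) * (((n:ℝ)+1-i) * (c + n - i)) := by
        refine Finset.sum_congr rfl fun i _ => by ring
    _ = SS c n := R2 hc n

end Stmt18Aux2

namespace Stmt18Aux3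
open Stmt18Aux Stmt18Aux2

variable {c : ℝ}

lemma rec2 (hc : 1 < c) (n : ℕ) :
    ((n:ℝ)+2) * ((n:ℝ)+c+1) * ((n:ℝ)+2*c) * SS c (n+2)
      = 2 * (2*(n:ℝ)+2*c+1) * SS c (n+1) := by
  have hnc : (n:ℝ) + c ≠ 0 := by
    have : (0:ℝ) ≤ n := Nat.cast_nonneg n
    positivity
  have hR1 := R1 hc (n+1)
  have hR2 := R2 hc (n+1)
  have hR3 := R3 hc n
  have hR4 := R4 hc n
  have hR5 := R5 hc n
  -- rewrite the level-(n+1) lemmas into the (n+2) shape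
  have hR1' : ∑ i ∈ range (n+3), AA c i * AA c (n+2-i) * ((i:ℝ) * (c + i - 1))
      = SS c (n+1) := by
    rw [← hR1]
  have hR2' : ∑ i ∈ range (n+3), AA c i * AA c (n+2-i) * (((n:ℝ)+2-i) * (c + n + 1 - i))
      = SS c (n+1) := by
    rw [← hR2]
    refine Finset.sum_congr (by norm_num) fun i _ => ?_
    push_cast
    have h1 : n+1+1-i = n+2-i := by omega
    rw [h1]
    ring_nf
  have hmain : ∑ i ∈ range (n+3),
      (((n:ℝ)+2) * ((n:ℝ)+c+1) * ((n:ℝ)+2*c) * (AA c i * AA c (n+2-i))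
        - (2*(n:ℝ)+2*c+1) * (AA c i * AA c (n+2-i) * ((i:ℝ) * (c + i - 1)))
        - (2*(n:ℝ)+2*c+1) * (AA c i * AA c (n+2-i) * (((n:ℝ)+2-i) * (c + n + 1 - i)))
        - 2 * (((n:ℝ)+c)⁻¹ * (AA c i * AA c (n+2-i) * ((i:ℝ) * (c + i - 1)) * (((n:ℝ)+2-i) * (c + n + 1 - i))))
        + ((n:ℝ)+c)⁻¹ * (AA c i * AA c (n+2-i) * ((i:ℝ) * (c + i - 1)) * (((i:ℝ) - 1) * (c + i - 2)))
        + ((n:ℝ)+c)⁻¹ * (AA c i * AA c (n+2-i) * (((n:ℝ)+2-i) * (c + n + 1 - i)) * (((n:ℝ)+1-i) * (c + n - i)))) = 0 := by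
    refine Finset.sum_eq_zero fun i _ => ?_
    field_simp
    ring
  have hSS : SS c (n+2) = ∑ i ∈ range (n+3), AA c i * AA c (n+2-i) := rfl
  rw [Finset.sum_add_distrib, Finset.sum_add_distrib, Finset.sum_sub_distrib,
      Finset.sum_sub_distrib, Finset.sum_sub_distrib, ← Finset.mul_sum, ← Finset.mul_sum,
      ← Finset.mul_sum, ← Finset.mul_sum, ← Finset.mul_sum, ← Finset.mul_sum,
      ← Finset.mul_sum] at hmain
  rw [hR1', hR2', hR3, hR4, hR5, ← hSS] at hmain
  have h2 : (2:ℝ) * (((n:ℝ)+c)⁻¹ * SS c n) - ((n:ℝ)+c)⁻¹ * SS c n - ((n:ℝ)+c)⁻¹ * SS c n = 0 := by ring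
  nlinarith [hmain, h2]

end Stmt18Aux3

namespace Stmt18Aux4
open Stmt18Aux Stmt18Aux2 Stmt18Aux3

noncomputable def TT (c : ℝ) (n : ℕ) : ℝ :=
  Real.Gamma (2*c + 2*n - 1) /
    ((Nat.factorial n : ℝ) * Real.Gamma (c + n)^2 * Real.Gamma (2*c + n - 1))

variable {c : ℝ}

lemma TT0 (hc : 1 < c) : SS c 0 = TT c 0 := by
  have hG : Real.Gamma c ≠ 0 := (Real.Gamma_pos_of_pos (by linarith)).ne'
  have hG2 : Real.Gamma (2*c - 1) ≠ 0 := (Real.Gamma_pos_of_pos (by linarith)).ne'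
  have hSS : SS c 0 = (Real.Gamma c)⁻¹ * (Real.Gamma c)⁻¹ := by
    simp [SS, AA]
  have hTT : TT c 0 = Real.Gamma (2*c - 1) / (Real.Gamma c ^2 * Real.Gamma (2*c - 1)) := by
    simp only [TT, Nat.cast_zero, Nat.factorial_zero, Nat.cast_one, one_mul, mul_zero, add_zero]
  rw [hSS, hTT]
  field_simp

lemma TT1 (hc : 1 < c) : SS c 1 = TT c 1 := by
  have hG : Real.Gamma c ≠ 0 := (Real.Gamma_pos_of_pos (by linarith)).ne'
  have hc0 : c ≠ 0 := by linarith
  have hG2c : Real.Gamma (2*c) ≠ 0 := (Real.Gamma_pos_of_pos (by linarith)).ne'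
  simp only [SS, TT, AA]
  rw [Finset.sum_range_succ, Finset.sum_range_one]
  simp only [Nat.sub_self, Nat.sub_zero, Nat.cast_zero, Nat.cast_one, add_zero,
    Nat.factorial_zero, Nat.factorial_one]
  rw [show c + 1 = c + 1 from rfl, Real.Gamma_add_one hc0,
      show 2*c + 2*1 - 1 = 2*c + 1 by ring, Real.Gamma_add_one (by positivity : (2:ℝ)*c ≠ 0),
      show 2*c + 1 - 1 = 2*c by ring]
  field_simp
  ring

set_option maxHeartbeats 1000000 in
lemma TTrec (hc : 1 < c) (n : ℕ) :
    ((n:ℝ)+2) * ((n:ℝ)+c+1) * ((n:ℝ)+2*c) * TT c (n+2)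
      = 2 * (2*(n:ℝ)+2*c+1) * TT c (n+1) := by
  have hn0 : (0:ℝ) ≤ n := Nat.cast_nonneg n
  have h1 : Real.Gamma (2*c + 2*((n:ℕ)+2:ℕ) - 1)
      = (2*c+2*n+2) * ((2*c+2*n+1) * Real.Gamma (2*c + 2*((n:ℕ)+1:ℕ) - 1)) := by
    push_cast
    rw [show 2*c + 2*((n:ℝ)+1) - 1 = 2*c+2*n+1 by ring,
        show 2*c + 2*((n:ℝ)+2) - 1 = (2*c + 2*n + 2) + 1 by ring,
        Real.Gamma_add_one (by linarith),
        show 2*c + 2*(n:ℝ) + 2 = (2*c + 2*n + 1) + 1 by ring,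
        Real.Gamma_add_one (by linarith)]
  have h2 : Real.Gamma (c + ((n:ℕ)+2:ℕ)) = (c+n+1) * Real.Gamma (c + ((n:ℕ)+1:ℕ)) := by
    push_cast
    rw [show c + ((n:ℝ)+1) = c+n+1 by ring,
        show c + ((n:ℝ)+2) = (c+n+1) + 1 by ring, Real.Gamma_add_one (by linarith)]
  have h3 : Real.Gamma (2*c + ((n:ℕ)+2:ℕ) - 1)
      = (2*c+n) * Real.Gamma (2*c + ((n:ℕ)+1:ℕ) - 1) := by
    push_cast
    rw [show 2*c + ((n:ℝ)+1) - 1 = 2*c+n by ring,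
        show 2*c + ((n:ℝ)+2) - 1 = (2*c+n) + 1 by ring, Real.Gamma_add_one (by linarith)]
  have hf : ((Nat.factorial (n+2) : ℕ) : ℝ) = ((n:ℝ)+2) * (Nat.factorial (n+1) : ℝ) := by
    rw [show n+2 = (n+1)+1 from rfl, Nat.factorial_succ]
    push_cast
    ring
  have hGp1 : Real.Gamma (c + ((n:ℕ)+1:ℕ)) ≠ 0 := (Gpos hc (n+1)).ne'
  have hGp2 : Real.Gamma (2*c + ((n:ℕ)+1:ℕ) - 1) ≠ 0 := by
    refine (Real.Gamma_pos_of_pos ?_).ne'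
    push_cast
    linarith
  have hfp : ((Nat.factorial (n+1) : ℕ) : ℝ) ≠ 0 := by positivity
  have hGp3 : Real.Gamma (2*c + 2*((n:ℕ)+1:ℕ) - 1) ≠ 0 := by
    refine (Real.Gamma_pos_of_pos ?_).ne'
    push_cast
    linarith
  have hD1 : ((Nat.factorial (n+2) : ℕ) : ℝ) * Real.Gamma (c + ((n:ℕ)+2:ℕ))^2 *
      Real.Gamma (2*c + ((n:ℕ)+2:ℕ) - 1) ≠ 0 := by
    rw [h2, h3, hf]
    have := (Gpos hc (n+1))
    have h2cn : (0:ℝ) < 2*c+n := by linarith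
    have : (0:ℝ) < Real.Gamma (2*c + ((n:ℕ)+1:ℕ) - 1) :=
      Real.Gamma_pos_of_pos (by push_cast; linarith)
    positivity
  have hD2 : ((Nat.factorial (n+1) : ℕ) : ℝ) * Real.Gamma (c + ((n:ℕ)+1:ℕ))^2 *
      Real.Gamma (2*c + ((n:ℕ)+1:ℕ) - 1) ≠ 0 := by
    have := (Gpos hc (n+1))
    have : (0:ℝ) < Real.Gamma (2*c + ((n:ℕ)+1:ℕ) - 1) :=
      Real.Gamma_pos_of_pos (by push_cast; linarith)
    positivity
  simp only [TT]
  rw [mul_div_assoc', mul_div_assoc', div_eq_div_iff hD1 hD2]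
  rw [h1, h2, h3, hf]
  ring

lemma SS_eq_TT (hc : 1 < c) (n : ℕ) : SS c n = TT c n := by
  induction n using Nat.strong_induction_on with
  | _ n ih =>
    match n with
    | 0 => exact TT0 hc
    | 1 => exact TT1 hc
    | (k+2) =>
      have h1 : SS c (k+1) = TT c (k+1) := ih (k+1) (by omega)
      have h2 := rec2 hc k
      have h3 := TTrec hc k
      have hk0 : (0:ℝ) ≤ k := Nat.cast_nonneg k
      have hcoef : ((k:ℝ)+2) * ((k:ℝ)+c+1) * ((k:ℝ)+2*c) ≠ 0 := by positivity
      rw [h1] at h2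
      rw [← h3] at h2
      exact mul_left_cancel₀ hcoef h2

end Stmt18Aux4

namespace Stmt18Poch

lemma poch_zero (b : ℝ) : poch b 0 = 1 := by simp [poch]

lemma poch_succ (b : ℝ) (k : ℕ) : poch b (k+1) = poch b k * (b + k) := by
  simp [poch, ascPochhammer_succ_eval]

lemma poch_pos {b : ℝ} (hb : 0 < b) (k : ℕ) : 0 < poch b k := by
  induction k with
  | zero => simp [poch_zero]
  | succ n ih =>
    rw [poch_succ]
    have : (0:ℝ) ≤ n := Nat.cast_nonneg n
    have : (0:ℝ) < b + n := by linarith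
    positivity

lemma poch_ge_one {b : ℝ} (hb : 1 ≤ b) (k : ℕ) : 1 ≤ poch b k := by
  induction k with
  | zero => simp [poch_zero]
  | succ n ih =>
    rw [poch_succ]
    have h0 : (0:ℝ) ≤ n := Nat.cast_nonneg n
    nlinarith

lemma Gamma_poch {b : ℝ} (hb : 0 < b) (k : ℕ) :
    Real.Gamma (b + k) = Real.Gamma b * poch b k := by
  induction k with
  | zero => simp [poch_zero]
  | succ n ih =>
    have hbn : b + (n:ℝ) ≠ 0 := by
      have : (0:ℝ) ≤ n := Nat.cast_nonneg n
      positivity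
    rw [show b + ((n+1:ℕ):ℝ) = (b + n) + 1 by push_cast; ring, Real.Gamma_add_one hbn, ih,
        poch_succ]
    ring

lemma poch_dup (b : ℝ) (n : ℕ) :
    poch (2*b) (2*n) = 4^n * poch b n * poch (b + 1/2) n := by
  induction n with
  | zero => simp [poch_zero]
  | succ m ih =>
    have h1 : 2*(m+1) = (2*m+1)+1 := by ring
    rw [h1, poch_succ, poch_succ, poch_succ, poch_succ, ih]
    push_cast
    ring

end Stmt18Poch

namespace Stmt18Final
open Stmt18Aux Stmt18Aux2 Stmt18Aux3 Stmt18Aux4 Stmt18Poch Finset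

lemma aux_alg (n : ℕ) (pA p1 p2 F G1 G2 Q : ℝ) (hp1 : p1 ≠ 0) (hp2 : p2 ≠ 0)
    (hF : F ≠ 0) (hG1 : G1 ≠ 0) (hG2 : G2 ≠ 0) :
    pA / (p1 * p2) * ((4:ℝ)^n * Q) / F
      = G1^2 * (Q * (G2 * (4^n * pA * p1) / (F * (G1*p1)^2 * (G2*p2)))) := by
  field_simp

lemma coeff_eq (a : ℝ) (ha : -1/2 < a) (q : ℝ) (n : ℕ) :
    poch (a+1) n / (poch (a+3/2) n * poch (2*(a+1)) n) * (4*(-q))^n / (Nat.factorial n : ℝ)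
      = Real.Gamma (a+3/2)^2 * ((-q)^n * SS (a+3/2) n) := by
  have hc : 1 < a + 3/2 := by linarith
  rw [SS_eq_TT hc n]
  unfold TT
  have hGcn : Real.Gamma (a+3/2 + n) = Real.Gamma (a+3/2) * poch (a+3/2) n :=
    Gamma_poch (by linarith) n
  have hG2n : Real.Gamma (2*(a+3/2) + n - 1) = Real.Gamma (2*(a+1)) * poch (2*(a+1)) n := by
    rw [show 2*(a+3/2) + (n:ℝ) - 1 = 2*(a+1) + n by ring]
    exact Gamma_poch (by linarith) n
  have hG22n : Real.Gamma (2*(a+3/2) + 2*n - 1)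
      = Real.Gamma (2*(a+1)) * (4^n * poch (a+1) n * poch (a+3/2) n) := by
    rw [show 2*(a+3/2) + 2*(n:ℝ) - 1 = 2*(a+1) + ((2*n : ℕ) : ℝ) by push_cast; ring,
        Gamma_poch (by linarith : (0:ℝ) < 2*(a+1)) (2*n), poch_dup,
        show a+1+1/2 = a+3/2 by ring]
  rw [hGcn, hG2n, hG22n]
  have hp1 : 0 < poch (a+3/2) n := poch_pos (by linarith) n
  have hp2 : 0 < poch (2*(a+1)) n := poch_pos (by linarith) n
  have hg1 : Real.Gamma (a+3/2) ≠ 0 := (Real.Gamma_pos_of_pos (by linarith)).ne'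
  have hg2 : Real.Gamma (2*(a+1)) ≠ 0 := (Real.Gamma_pos_of_pos (by linarith)).ne'
  have hfn : ((Nat.factorial n : ℕ) : ℝ) ≠ 0 := by positivity
  rw [mul_pow]
  exact aux_alg n _ _ _ _ _ _ _ hp1.ne' hp2.ne' hfn hg1 hg2

lemma summable_norm_f (a : ℝ) (ha : -1/2 < a) (q : ℝ) :
    Summable fun k => ‖(-q)^k * AA (a+3/2) k‖ := by
  have hc : 1 < a + 3/2 := by linarith
  have hG : 0 < Real.Gamma (a+3/2) := Real.Gamma_pos_of_pos (by linarith)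
  refine Summable.of_nonneg_of_le (fun k => norm_nonneg _)
    (fun k => ?_) ((Real.summable_pow_div_factorial |q|).mul_right (Real.Gamma (a+3/2))⁻¹)
  have hAA : AA (a+3/2) k ≤ ((Nat.factorial k : ℝ) * Real.Gamma (a+3/2))⁻¹ := by
    unfold AA
    have hfk : (0:ℝ) < (Nat.factorial k : ℝ) := by positivity
    apply inv_anti₀ (by positivity)
    have hg : Real.Gamma (a+3/2 + k) = Real.Gamma (a+3/2) * poch (a+3/2) k :=
      Gamma_poch (by linarith) k
    rw [hg]
    calc (Nat.factorial k : ℝ) * Real.Gamma (a+3/2)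
        = (Nat.factorial k : ℝ) * Real.Gamma (a+3/2) * 1 := by ring
      _ ≤ (Nat.factorial k : ℝ) * Real.Gamma (a+3/2) * poch (a+3/2) k :=
          mul_le_mul_of_nonneg_left (poch_ge_one (le_of_lt hc) k) (by positivity)
      _ = (Nat.factorial k : ℝ) * (Real.Gamma (a+3/2) * poch (a+3/2) k) := by ring
  have hAA0 : 0 < AA (a+3/2) k := AA_pos hc k
  calc ‖(-q)^k * AA (a+3/2) k‖ = |(-q)^k| * AA (a+3/2) k := by
        rw [norm_mul, Real.norm_eq_abs, Real.norm_eq_abs, abs_of_pos hAA0]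
    _ = |q|^k * AA (a+3/2) k := by rw [abs_pow, abs_neg]
    _ ≤ |q|^k * ((Nat.factorial k : ℝ) * Real.Gamma (a+3/2))⁻¹ := by
        apply mul_le_mul_of_nonneg_left hAA (by positivity)
    _ = |q|^k / (Nat.factorial k : ℝ) * (Real.Gamma (a+3/2))⁻¹ := by
        rw [mul_inv]
        ring

end Stmt18Final

namespace Stmt18Final2
open Stmt18Aux Stmt18Aux2 Stmt18Aux3 Stmt18Aux4 Stmt18Poch Stmt18Final Finset

lemma besselJ_eq (a x : ℝ) (ha : -1/2 < a) (hx : 0 < x) :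
    besselJ (a + 1/2) x
      = (x/2) ^ ((a + 1/2 : ℝ)) * ∑' k : ℕ, (-((x/2)^2))^k * AA (a+3/2) k := by
  have hx2 : 0 < x/2 := by linarith
  unfold besselJ
  rw [← tsum_mul_left]
  refine tsum_congr fun k => ?_
  have h1 : Real.Gamma (a + 1/2 + k + 1) = Real.Gamma (a + 3/2 + k) := by
    rw [show a + 1/2 + (k:ℝ) + 1 = a + 3/2 + k by ring]
  have h2 : (x/2) ^ (2*(k:ℝ) + (a + 1/2)) = ((x/2)^2)^k * (x/2) ^ ((a + 1/2 : ℝ)) := by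
    rw [Real.rpow_add hx2]
    congr 1
    rw [show (2*(k:ℝ)) = ((2*k : ℕ) : ℝ) by push_cast; ring, Real.rpow_natCast, pow_mul]
  rw [h1, h2]
  unfold AA
  rw [neg_pow ((x/2)^2) k, div_eq_mul_inv]
  ring

lemma cauchy_eq (a x : ℝ) (ha : -1/2 < a) (hx : 0 < x) :
    (∑' k : ℕ, (-((x/2)^2))^k * AA (a+3/2) k) * (∑' k : ℕ, (-((x/2)^2))^k * AA (a+3/2) k)
      = ∑' n : ℕ, (-((x/2)^2))^n * SS (a+3/2) n := by
  have hnorm := summable_norm_f a ha ((x/2)^2)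
  rw [tsum_mul_tsum_eq_tsum_sum_antidiagonal_of_summable_norm hnorm hnorm]
  refine tsum_congr fun n => ?_
  rw [Finset.Nat.sum_antidiagonal_eq_sum_range_succ_mk, SS, Finset.mul_sum]
  refine Finset.sum_congr rfl fun i hi => ?_
  have hin : i ≤ n := Nat.lt_succ_iff.mp (Finset.mem_range.mp hi)
  have : (-((x/2)^2))^i * (-((x/2)^2))^(n-i) = (-((x/2)^2))^n := by
    rw [← pow_add, Nat.add_sub_cancel' hin]
  calc (-((x/2)^2))^i * AA (a+3/2) i * ((-((x/2)^2))^(n-i) * AA (a+3/2) (n-i))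
      = (-((x/2)^2))^i * (-((x/2)^2))^(n-i) * (AA (a+3/2) i * AA (a+3/2) (n-i)) := by ring
    _ = (-((x/2)^2))^n * (AA (a+3/2) i * AA (a+3/2) (n-i)) := by rw [this]

lemma oneF2_eq (a x : ℝ) (ha : -1/2 < a) (hx : 0 < x) :
    oneF2 (a + 1) (a + 3/2) (2*(a+1)) (-x^2)
      = Real.Gamma (a+3/2)^2 *
        ((∑' k : ℕ, (-((x/2)^2))^k * AA (a+3/2) k) *
          (∑' k : ℕ, (-((x/2)^2))^k * AA (a+3/2) k)) := by
  unfold oneF2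
  rw [cauchy_eq a x ha hx, ← tsum_mul_left]
  refine tsum_congr fun n => ?_
  rw [show -x^2 = 4*(-((x/2)^2)) by ring]
  exact coeff_eq a ha ((x/2)^2) n

end Stmt18Final2

open Stmt18Aux Stmt18Aux2 Stmt18Aux3 Stmt18Aux4 Stmt18Poch Stmt18Final Stmt18Final2


theorem stmt18 (a x : ℝ) (ha : -1 / 2 < a) (hx : 0 < x) :
    oneF2 (a + 1) (a + 3 / 2) (2 * (a + 1)) (-x ^ 2)
        = Real.Gamma (a + 3 / 2) ^ 2 / (x / 2) ^ (2 * a + 1) *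
          besselJ (a + 1 / 2) x ^ 2 ∧
      0 ≤ oneF2 (a + 1) (a + 3 / 2) (2 * (a + 1)) (-x ^ 2) := by
  have hx2 : 0 < x/2 := by linarith
  have hone := oneF2_eq a x ha hx
  have hJ := besselJ_eq a x ha hx
  have hpow2 : ((x/2) ^ ((a + 1/2 : ℝ)))^(2:ℕ) = (x/2) ^ ((2*a+1 : ℝ)) := by
    rw [← Real.rpow_natCast ((x/2) ^ ((a + 1/2 : ℝ))) 2, ← Real.rpow_mul hx2.le]
    congr 1
    push_cast
    ring
  have hJ2 : besselJ (a + 1/2) x ^ 2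
      = (x/2) ^ ((2*a+1 : ℝ)) *
        ((∑' k : ℕ, (-((x/2)^2))^k * AA (a+3/2) k) *
          (∑' k : ℕ, (-((x/2)^2))^k * AA (a+3/2) k)) := by
    rw [hJ, mul_pow, hpow2]
    ring
  have hxp : (x/2) ^ ((2*a+1 : ℝ)) ≠ 0 := (Real.rpow_pos_of_pos hx2 _).ne'
  constructor
  · rw [hone, hJ2]
    field_simp
  · rw [hone]
    exact mul_nonneg (sq_nonneg _) (mul_self_nonneg _)
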